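/- arXiv:1412.2476 — 6 statements merged into one kernel-verified Lean document; each statement's English description precedes it below -/
import Mathlib

section
/- Let β : (0,∞) → ℝ be strongly convex with modulus κ > 0 and β(1) = 1. Then there exist ρ₁, ρ₂ > 1 such that −ρ₁ + 3ρ₂ = 2 and −β(ρ₁) + 3β(ρ₂) = −2. -/
/-- Solvability of system (3.9): for `β` strongly convex with `β 1 = 1`, there
exist `ρ₁, ρ₂ > 1` with `−ρ₁ + 3ρ₂ = 2` and `−β(ρ₁) + 3β(ρ₂) = −2`. -/
theorem exists_rho_system
    (β : ℝ → ℝ) (κ : ℝ) (hκ : 0 < κ)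
    (hβ : ∀ x₁ x₂ : ℝ, 0 < x₁ → 0 < x₂ → ∀ l : ℝ, 0 ≤ l → l ≤ 1 →
      β (l * x₁ + (1 - l) * x₂) ≤
        l * β x₁ + (1 - l) * β x₂ - κ * l * (1 - l) * (x₁ - x₂) ^ 2)
    (hβ1 : β 1 = 1) :
    ∃ ρ₁ ρ₂ : ℝ, 1 < ρ₁ ∧ 1 < ρ₂ ∧ -ρ₁ + 3 * ρ₂ = 2 ∧
      -β ρ₁ + 3 * β ρ₂ = -2 := by
  -- convexity
  have hconv : ConvexOn ℝ (Set.Ioi (0:ℝ)) β := by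
    refine ⟨convex_Ioi 0, fun x hx y hy a b ha hb hab => ?_⟩
    have h := hβ x y hx hy a ha (by linarith)
    have hb' : (1 : ℝ) - a = b := by linarith
    rw [hb'] at h
    have hnn : 0 ≤ κ * a * b * (x - y) ^ 2 := by positivity
    calc β (a • x + b • y) = β (a * x + b * y) := rfl
      _ ≤ a * β x + b * β y - κ * a * b * (x - y) ^ 2 := h
      _ ≤ a * β x + b * β y := by linarith
      _ = a • β x + b • β y := rfl
  have hcont : ContinuousOn β (Set.Ioi (0:ℝ)) :=
    hconv.continuousOn isOpen_Ioi
  set g : ℝ → ℝ := fun s => -β s + 3 * β ((s + 2) / 3) with hg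
  have hgcont : ContinuousOn g (Set.Ioi (0:ℝ)) := by
    apply ContinuousOn.add
    · exact (hcont.neg)
    · have : ContinuousOn (fun s : ℝ => β ((s + 2) / 3)) (Set.Ioi (0:ℝ)) := by
        apply hcont.comp (by fun_prop)
        intro s hs
        simp only [Set.mem_Ioi] at hs ⊢
        linarith
      exact this.const_smul (3:ℝ)
  set R : ℝ := 1 + Real.sqrt (6 / κ) with hR
  have hsq : Real.sqrt (6 / κ) ^ 2 = 6 / κ := Real.sq_sqrt (by positivity)
  have hsqpos : 0 < Real.sqrt (6 / κ) := Real.sqrt_pos.mpr (by positivity)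
  have hR1 : 1 < R := by simp [hR]; linarith
  have hgR : g R ≤ -2 := by
    have h := hβ R 1 (by linarith) one_pos (1/3) (by norm_num) (by norm_num)
    have hcomb : (1/3 : ℝ) * R + (1 - 1/3) * 1 = (R + 2) / 3 := by ring
    rw [hcomb, hβ1] at h
    have hRm : (R - 1) ^ 2 = 6 / κ := by
      rw [hR]
      have heq : (1 + Real.sqrt (6/κ) - 1)^2 = Real.sqrt (6/κ)^2 := by ring
      rw [heq, hsq]
    have hκterm : κ * (1/3) * (1 - 1/3) * (R - 1) ^ 2 = 4 / 3 := by
      rw [hRm]; field_simp; ring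
    rw [hκterm] at h
    simp only [hg]
    linarith
  have hg1 : g 1 = 2 := by simp [hg]; norm_num [hβ1]
  have hsub : Set.Icc (1:ℝ) R ⊆ Set.Ioi (0:ℝ) := fun x hx => by
    simp only [Set.mem_Icc] at hx; simp only [Set.mem_Ioi]; linarith [hx.1]
  have hivt := intermediate_value_Icc' (le_of_lt hR1) (hgcont.mono hsub)
  have hmem : (-2 : ℝ) ∈ Set.Icc (g R) (g 1) := by
    constructor
    · exact hgR
    · rw [hg1]; norm_num
  obtain ⟨s, hs, hgs⟩ := hivt hmem
  have hs1 : 1 < s := by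
    rcases lt_or_eq_of_le hs.1 with h | h
    · exact h
    · exfalso; rw [← h] at hgs; rw [hg1] at hgs; norm_num at hgs
  refine ⟨s, (s + 2) / 3, hs1, by linarith, by ring, ?_⟩
  simpa [hg] using hgs
end

section
/- Let β : (0,∞) → ℝ be strongly convex with modulus κ > 0. If ρ₁, ρ₂ > 0 and λ ∈ [0,1] satisfy −(1/2)ρ₁ + (3/2)ρ₂ > 0, then −β(ρ₁) + 3β(ρ₂) ≤ 2β(−(1/2)ρ₁ + (3/2)ρ₂) − (3/2)κ(ρ₁−ρ₂)². -/
/-- The key estimate (3.11): applying the extended strong convexity inequality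
with the negative weight `−1/2`. -/
theorem strong_convexity_estimate
    (β : ℝ → ℝ) (κ : ℝ) (hκ : 0 < κ)
    (hβ : ∀ x₁ x₂ : ℝ, 0 < x₁ → 0 < x₂ → ∀ l : ℝ, 0 ≤ l → l ≤ 1 →
      β (l * x₁ + (1 - l) * x₂) ≤
        l * β x₁ + (1 - l) * β x₂ - κ * l * (1 - l) * (x₁ - x₂) ^ 2)
    (ρ₁ ρ₂ l : ℝ) (hρ₁ : 0 < ρ₁) (hρ₂ : 0 < ρ₂) (hl0 : 0 ≤ l) (hl1 : l ≤ 1)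
    (hmix : 0 < -(1 / 2) * ρ₁ + (3 / 2) * ρ₂) :
    -β ρ₁ + 3 * β ρ₂ ≤
      2 * β (-(1 / 2) * ρ₁ + (3 / 2) * ρ₂) - (3 / 2) * κ * (ρ₁ - ρ₂) ^ 2 := by
  have h := hβ ρ₁ (-(1 / 2) * ρ₁ + (3 / 2) * ρ₂) hρ₁ hmix (1/3) (by norm_num) (by norm_num)
  have e : (1/3 : ℝ) * ρ₁ + (1 - 1/3) * (-(1 / 2) * ρ₁ + (3 / 2) * ρ₂) = ρ₂ := by ring
  rw [e] at h
  nlinarith [h]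
end

section
/- Let β : (0,∞) → ℝ be strongly convex with modulus κ > 0, β(1) = 1, and let w ∈ ℝ³ with |w| ≥ 1. Then the matrix U with rows (0, 0, w) can be written as U = (1/2)U₊ + (1/4)V₁ + (1/4)V₂, where U₊ has rows (w, w, w), V₁ has rows (ρ₁w, w, β(ρ₁)w), V₂ has rows (−3ρ₂w, −3w, −3β(ρ₂)w), for some ρ₁, ρ₂ > 1; moreover rank(U₊ − (1/2)(V₁+V₂)) ≤ 2 and rank(V₁ − V₂) ≤ 2. -/
/-- The 3×3 matrix whose rows are the vectors `m`, `v`, `w` ∈ ℝ³. -/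
noncomputable def rowMat (m v w : EuclideanSpace ℝ (Fin 3)) :
    Matrix (Fin 3) (Fin 3) ℝ :=
  Matrix.of ![m, v, w]

lemma rank_vmv_le (c v : Fin 3 → ℝ) : (Matrix.vecMulVec c v).rank ≤ 2 := by
  rw [Matrix.vecMulVec_eq Unit]
  calc (Matrix.replicateCol Unit c * Matrix.replicateRow Unit v).rank
      ≤ (Matrix.replicateCol Unit c).rank := Matrix.rank_mul_le_left _ _
    _ ≤ Fintype.card Unit := Matrix.rank_le_card_width _
    _ ≤ 2 := by simp

/-- The explicit rank-2 lamination decomposition of Lemma geom1: the matrix with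
rows `(0,0,w)`, `|w| ≥ 1`, splits as `(1/2)U₊ + (1/4)V₁ + (1/4)V₂` with
`U₊ = (w,w,w)`, `V₁ = (ρ₁w, w, β(ρ₁)w)`, `V₂ = (−3ρ₂w, −3w, −3β(ρ₂)w)`,
for some `ρ₁, ρ₂ > 1`, and the splittings run along rank-2 directions. -/
theorem geom1_decomposition
    (β : ℝ → ℝ) (κ : ℝ) (hκ : 0 < κ)
    (hβ : ∀ x₁ x₂ : ℝ, 0 < x₁ → 0 < x₂ → ∀ l : ℝ, 0 ≤ l → l ≤ 1 →
      β (l * x₁ + (1 - l) * x₂) ≤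
        l * β x₁ + (1 - l) * β x₂ - κ * l * (1 - l) * (x₁ - x₂) ^ 2)
    (hβ1 : β 1 = 1)
    (w : EuclideanSpace ℝ (Fin 3)) (hw : 1 ≤ ‖w‖) :
    ∃ ρ₁ ρ₂ : ℝ, 1 < ρ₁ ∧ 1 < ρ₂ ∧
      rowMat 0 0 w =
        (1 / 2 : ℝ) • rowMat w w w +
        (1 / 4 : ℝ) • rowMat (ρ₁ • w) w (β ρ₁ • w) +
        (1 / 4 : ℝ) • rowMat ((-3 * ρ₂) • w) ((-3 : ℝ) • w) ((-3 * β ρ₂) • w) ∧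
      Matrix.rank (rowMat w w w -
        ((1 / 2 : ℝ) • rowMat (ρ₁ • w) w (β ρ₁ • w) +
         (1 / 2 : ℝ) • rowMat ((-3 * ρ₂) • w) ((-3 : ℝ) • w) ((-3 * β ρ₂) • w))) ≤ 2 ∧
      Matrix.rank (rowMat (ρ₁ • w) w (β ρ₁ • w) -
        rowMat ((-3 * ρ₂) • w) ((-3 : ℝ) • w) ((-3 * β ρ₂) • w)) ≤ 2 := by
  -- β is convex on (0,∞)
  have hconv : ConvexOn ℝ (Set.Ioi (0:ℝ)) β := by
    refine ⟨convex_Ioi 0, ?_⟩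
    intro x hx y hy a b ha hb hab
    have hb' : b = 1 - a := by linarith
    subst hb'
    have := hβ x y hx hy a ha (by linarith)
    simp only [smul_eq_mul]
    nlinarith [mul_nonneg (mul_nonneg (mul_nonneg hκ.le ha) hb) (sq_nonneg (x - y))]
  have hcont : ContinuousOn β (Set.Ioi (0:ℝ)) := by
    simpa using hconv.continuousOn_interior
  -- the function f ρ = β(3ρ-2) - 3 β ρ - 2
  set f : ℝ → ℝ := fun ρ => β (3 * ρ - 2) - 3 * β ρ - 2 with hf
  have hfc : ContinuousOn f (Set.Ici (1:ℝ)) := by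
    have hb1 : ContinuousOn (fun ρ : ℝ => β (3 * ρ - 2)) (Set.Ici 1) :=
      hcont.comp (by fun_prop) (fun x hx => by simp at hx ⊢; linarith)
    have hb2 : ContinuousOn β (Set.Ici (1:ℝ)) :=
      hcont.mono (fun x hx => by simp at hx ⊢; linarith)
    exact (hb1.sub (continuousOn_const.mul hb2)).sub continuousOn_const
  -- lower bound from strong convexity
  have key : ∀ ρ : ℝ, 1 ≤ ρ → -4 + 6 * κ * (ρ - 1) ^ 2 ≤ f ρ := by
    intro ρ hρ
    have h1 : (0:ℝ) < 3 * ρ - 2 := by linarith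
    have := hβ (3 * ρ - 2) 1 h1 one_pos (1/3) (by norm_num) (by norm_num)
    have harg : (1/3 : ℝ) * (3 * ρ - 2) + (1 - 1/3) * 1 = ρ := by ring
    rw [harg, hβ1] at this
    simp only [hf]
    nlinarith [this]
  set R : ℝ := 1 + Real.sqrt (1 / κ) with hR
  have hsq : Real.sqrt (1 / κ) ^ 2 = 1 / κ := Real.sq_sqrt (by positivity)
  have h1R : (1:ℝ) ≤ R := by
    rw [hR]; nlinarith [Real.sqrt_nonneg (1 / κ)]
  have hfR : 0 ≤ f R := by
    have h := key R h1R
    have hRv : (R - 1) ^ 2 = 1 / κ := by rw [hR, add_sub_cancel_left]; exact hsq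
    rw [hRv] at h
    rw [show 6 * κ * (1 / κ) = 6 from by field_simp] at h
    linarith
  have hf1 : f 1 = -4 := by simp only [hf]; norm_num [hβ1]
  obtain ⟨c, hc, hfc0⟩ : ∃ c ∈ Set.Icc (1:ℝ) R, f c = 0 := by
    have := intermediate_value_Icc h1R (hfc.mono (Set.Icc_subset_Ici_self))
    have h0mem : (0:ℝ) ∈ Set.Icc (f 1) (f R) := by
      constructor <;> [linarith [hf1]; linarith [hfR]]
    exact this h0mem
  have hc1 : 1 < c := by
    rcases lt_or_eq_of_le hc.1 with h | h
    · exact h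
    · exfalso; rw [← h, hf1] at hfc0; norm_num at hfc0
  refine ⟨3 * c - 2, c, by linarith, hc1, ?_, ?_, ?_⟩
  · -- matrix identity
    have hβrel : β (3 * c - 2) = 3 * β c + 2 := by simp [hf] at hfc0; linarith
    funext i j
    fin_cases i <;>
      simp [rowMat, Matrix.add_apply, Matrix.smul_apply, hβrel,
        Matrix.vecHead, Matrix.vecTail, PiLp.smul_apply, smul_eq_mul] <;> ring
  · -- first rank
    have hβrel : β (3 * c - 2) = 3 * β c + 2 := by simp [hf] at hfc0; linarith
    have heq : rowMat w w w -
        ((1 / 2 : ℝ) • rowMat ((3 * c - 2) • w) w (β (3 * c - 2) • w) +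
         (1 / 2 : ℝ) • rowMat ((-3 * c) • w) ((-3 : ℝ) • w) ((-3 * β c) • w)) =
        Matrix.vecMulVec ![2, 2, 0] (w : Fin 3 → ℝ) := by
      funext i j
      fin_cases i <;>
        simp [rowMat, Matrix.vecMulVec_apply, Matrix.add_apply, Matrix.smul_apply,
          Matrix.vecHead, Matrix.vecTail, hβrel, PiLp.smul_apply, smul_eq_mul] <;> ring
    rw [heq]; exact rank_vmv_le _ _
  · -- second rank
    have heq : rowMat ((3 * c - 2) • w) w (β (3 * c - 2) • w) -
        rowMat ((-3 * c) • w) ((-3 : ℝ) • w) ((-3 * β c) • w) =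
        Matrix.vecMulVec ![3 * c - 2 + 3 * c, 4, β (3 * c - 2) + 3 * β c]
          (w : Fin 3 → ℝ) := by
      funext i j
      fin_cases i <;>
        simp [rowMat, Matrix.vecMulVec_apply, Matrix.sub_apply,
          Matrix.vecHead, Matrix.vecTail, PiLp.smul_apply, smul_eq_mul] <;> ring
    rw [heq]; exact rank_vmv_le _ _
end

section
/- Let β : (0,∞) → ℝ be strongly convex with modulus κ > 0. Fix α > 0 and η ≥ 0. Then there exist λ ∈ (0,1], ρ₁, ρ₂ > 0 with λρ₁ + (1−λ)ρ₂ = α and λβ(ρ₁) + (1−λ)β(ρ₂) = β(α) + η; moreover one can choose ρ₁, ρ₂, λ depending continuously on η with λ(0) = 1 and ρ₁(0) = ρ₂(0) = α. -/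
/-- Nesting lemma: spreading a two-point distribution with fixed mean strictly
increases the expectation of a strongly convex function. -/
lemma nest_strict
    (β : ℝ → ℝ) (κ : ℝ) (hκ : 0 < κ)
    (hβ : ∀ x₁ x₂ : ℝ, 0 < x₁ → 0 < x₂ → ∀ l : ℝ, 0 ≤ l → l ≤ 1 →
      β (l * x₁ + (1 - l) * x₂) ≤
        l * β x₁ + (1 - l) * β x₂ - κ * l * (1 - l) * (x₁ - x₂) ^ 2)
    (m l₁ l₂ r₁ r₂ R₁ R₂ : ℝ)
    (hl₁ : 0 < l₁) (hl₁' : l₁ ≤ 1)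
    (hR₁ : 0 < R₁) (h1 : R₁ < r₁) (h2 : r₁ ≤ r₂) (h3 : r₂ < R₂)
    (hm1 : l₁ * r₁ + (1 - l₁) * r₂ = m) (hm2 : l₂ * R₁ + (1 - l₂) * R₂ = m) :
    l₁ * β r₁ + (1 - l₁) * β r₂ < l₂ * β R₁ + (1 - l₂) * β R₂ := by
  have hΔ : 0 < R₂ - R₁ := by linarith
  set a : ℝ := (R₂ - r₁) / (R₂ - R₁) with ha_def
  set b : ℝ := (R₂ - r₂) / (R₂ - R₁) with hb_def
  have ha0 : 0 < a := div_pos (by linarith) hΔ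
  have ha1 : a < 1 := (div_lt_one hΔ).2 (by linarith)
  have hb0 : 0 < b := div_pos (by linarith) hΔ
  have hb1 : b < 1 := (div_lt_one hΔ).2 (by linarith)
  have hR₂ : 0 < R₂ := by linarith
  have hr₁ : a * R₁ + (1 - a) * R₂ = r₁ := by
    rw [ha_def]; field_simp [hΔ.ne']
    ring
  have hr₂ : b * R₁ + (1 - b) * R₂ = r₂ := by
    rw [hb_def]; field_simp [hΔ.ne']
    ring
  have H1 := hβ R₁ R₂ hR₁ hR₂ a ha0.le ha1.le
  rw [hr₁] at H1
  have H2 := hβ R₁ R₂ hR₁ hR₂ b hb0.le hb1.le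
  rw [hr₂] at H2
  -- the combined coefficient equals l₂
  have hC : l₁ * a + (1 - l₁) * b = l₂ := by
    have hmix : (l₁ * a + (1 - l₁) * b) * R₁ + (1 - (l₁ * a + (1 - l₁) * b)) * R₂ = m := by
      linear_combination l₁ * hr₁ + (1 - l₁) * hr₂ + hm1
    have hz : (l₁ * a + (1 - l₁) * b - l₂) * (R₁ - R₂) = 0 := by
      linear_combination hmix - hm2
    rcases mul_eq_zero.1 hz with h | h
    · linarith
    · exfalso; linarith
  have e1 : l₁ * β r₁ ≤
      l₁ * (a * β R₁ + (1 - a) * β R₂ - κ * a * (1 - a) * (R₁ - R₂) ^ 2) :=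
    mul_le_mul_of_nonneg_left H1 hl₁.le
  have e2 : (1 - l₁) * β r₂ ≤
      (1 - l₁) * (b * β R₁ + (1 - b) * β R₂ - κ * b * (1 - b) * (R₁ - R₂) ^ 2) :=
    mul_le_mul_of_nonneg_left H2 (by linarith)
  have hpos : 0 < l₁ * (κ * a * (1 - a) * (R₁ - R₂) ^ 2) := by
    have hsq : 0 < (R₁ - R₂) ^ 2 :=
      pow_two_pos_of_ne_zero (sub_ne_zero.2 (ne_of_lt (by linarith)))
    have h1a : 0 < 1 - a := by linarith
    exact mul_pos hl₁ (mul_pos (mul_pos (mul_pos hκ ha0) h1a) hsq)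
  have hpos2 : 0 ≤ (1 - l₁) * (κ * b * (1 - b) * (R₁ - R₂) ^ 2) := by
    have hsq : 0 ≤ (R₁ - R₂) ^ 2 := sq_nonneg _
    have h1b : 0 ≤ 1 - b := by linarith
    have h1l : 0 ≤ 1 - l₁ := by linarith
    exact mul_nonneg h1l (mul_nonneg (mul_nonneg (mul_nonneg hκ.le hb0.le) h1b) hsq)
  have hCP : l₂ * β R₁ = l₁ * (a * β R₁) + (1 - l₁) * (b * β R₁) := by
    rw [← hC]; ring
  have hCQ : (1 - l₂) * β R₂ = l₁ * ((1 - a) * β R₂) + (1 - l₁) * ((1 - b) * β R₂) := by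
    rw [← hC]; ring
  nlinarith [e1, e2, hpos, hpos2, hCP, hCQ]

/-- Solvability of system (5.2)/(5.3) ('etasystem1'): any value `β(α) + η`,
`η ≥ 0`, is realized as a convex combination along the graph of `β`, with the
data depending continuously on `η` and reducing to the trivial combination at
`η = 0`. -/
theorem etasystem1_solvable
    (β : ℝ → ℝ) (κ : ℝ) (hκ : 0 < κ)
    (hβ : ∀ x₁ x₂ : ℝ, 0 < x₁ → 0 < x₂ → ∀ l : ℝ, 0 ≤ l → l ≤ 1 →
      β (l * x₁ + (1 - l) * x₂) ≤
        l * β x₁ + (1 - l) * β x₂ - κ * l * (1 - l) * (x₁ - x₂) ^ 2)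
    (α : ℝ) (hα : 0 < α) :
    ∃ l ρ₁ ρ₂ : ℝ → ℝ,
      ContinuousOn l (Set.Ici 0) ∧ ContinuousOn ρ₁ (Set.Ici 0) ∧
      ContinuousOn ρ₂ (Set.Ici 0) ∧
      l 0 = 1 ∧ ρ₁ 0 = α ∧ ρ₂ 0 = α ∧
      ∀ η : ℝ, 0 ≤ η →
        0 < l η ∧ l η ≤ 1 ∧ 0 < ρ₁ η ∧ 0 < ρ₂ η ∧
        l η * ρ₁ η + (1 - l η) * ρ₂ η = α ∧
        l η * β (ρ₁ η) + (1 - l η) * β (ρ₂ η) = β α + η := by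
  classical
  -- β is convex on (0, ∞), hence continuous there
  have hβconv : ConvexOn ℝ (Set.Ioi 0) β := by
    refine ⟨convex_Ioi 0, ?_⟩
    intro x hx y hy p q hp hq hpq
    have hq' : q = 1 - p := by linarith
    have h := hβ x y hx hy p hp (by linarith)
    have hκterm : 0 ≤ κ * p * (1 - p) * (x - y) ^ 2 :=
      mul_nonneg (mul_nonneg (mul_nonneg hκ.le hp) (by linarith)) (sq_nonneg _)
    rw [hq']
    have : p * x + (1 - p) * y = p • x + (1 - p) • y := by simp
    calc β (p • x + (1 - p) • y) = β (p * x + (1 - p) * y) := by simp [smul_eq_mul]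
      _ ≤ p * β x + (1 - p) * β y - κ * p * (1 - p) * (x - y) ^ 2 := h
      _ ≤ p * β x + (1 - p) * β y := by linarith
      _ = p • β x + (1 - p) • β y := by simp [smul_eq_mul]
  have hβcont : ContinuousOn β (Set.Ioi 0) := hβconv.continuousOn isOpen_Ioi
  -- explicit parametrization
  set L : ℝ → ℝ := fun s => (1 + s ^ 4) / (1 + s ^ 2 + s ^ 4) with hL_def
  set P : ℝ → ℝ := fun s => α / (1 + s ^ 4) with hP_def
  set Q : ℝ → ℝ := fun s => α * (1 + s ^ 2) with hQ_def
  have hden : ∀ s : ℝ, 0 < 1 + s ^ 2 + s ^ 4 := fun s => by positivity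
  have hden4 : ∀ s : ℝ, 0 < 1 + s ^ 4 := fun s => by positivity
  have hLpos : ∀ s, 0 < L s := fun s => div_pos (hden4 s) (hden s)
  have hLle : ∀ s, L s ≤ 1 := fun s => by
    simp only [hL_def]
    exact div_le_one_of_le₀ (by nlinarith [sq_nonneg s]) (hden s).le
  have hPpos : ∀ s, 0 < P s := fun s => div_pos hα (hden4 s)
  have hQpos : ∀ s, 0 < Q s := fun s => by
    have : (0:ℝ) < 1 + s ^ 2 := by positivity
    exact mul_pos hα this
  have hmean : ∀ s, L s * P s + (1 - L s) * Q s = α := by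
    intro s
    simp only [hL_def, hP_def, hQ_def]
    field_simp
    ring
  have hL0 : L 0 = 1 := by rw [hL_def]; norm_num
  have hP0 : P 0 = α := by rw [hP_def]; norm_num
  have hQ0 : Q 0 = α := by rw [hQ_def]; norm_num
  set G : ℝ → ℝ := fun s => L s * β (P s) + (1 - L s) * β (Q s) with hG_def
  have hG0 : G 0 = β α := by
    simp only [hG_def]
    rw [hL0, hP0, hQ0]; ring
  -- strict monotonicity of G on [0, ∞)
  have hPanti : ∀ s t : ℝ, 0 ≤ s → s < t → P t < P s := by
    intro s t hs hst
    simp only [hP_def]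
    apply div_lt_div_of_pos_left hα (hden4 s)
    have : s ^ 4 < t ^ 4 := by
      exact pow_lt_pow_left₀ hst hs (by norm_num)
    linarith
  have hQmono : ∀ s t : ℝ, 0 ≤ s → s < t → Q s < Q t := by
    intro s t hs hst
    simp only [hQ_def]
    have : s ^ 2 < t ^ 2 := pow_lt_pow_left₀ hst hs (by norm_num)
    nlinarith [mul_lt_mul_of_pos_left this hα]
  have hPleQ : ∀ s : ℝ, P s ≤ Q s := by
    intro s
    simp only [hP_def, hQ_def]
    have h1 : α / (1 + s ^ 4) ≤ α := by
      apply div_le_self hα.le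
      nlinarith [pow_le_pow_left₀ (le_refl (0:ℝ)) (le_refl (0:ℝ)) 4, sq_nonneg (s^2)]
    nlinarith [sq_nonneg s]
  have hGmono : StrictMonoOn G (Set.Ici (0:ℝ)) := by
    intro s hs t ht hst
    simp only [Set.mem_Ici] at hs ht
    exact nest_strict β κ hκ hβ α (L s) (L t) (P s) (Q s) (P t) (Q t)
      (hLpos s) (hLle s) (hPpos t) (hPanti s t hs hst) (hPleQ s)
      (hQmono s t hs hst) (hmean s) (hmean t)
  -- growth of G
  have hGgrow : ∀ s : ℝ, 1 ≤ s → β α + κ * α ^ 2 / 2 * s ≤ G s := by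
    intro s hs1
    have key := hβ (P s) (Q s) (hPpos s) (hQpos s) (L s) (hLpos s).le (hLle s)
    rw [hmean s] at key
    have hid : L s * (1 - L s) * (P s - Q s) ^ 2 = α ^ 2 * s ^ 6 / (1 + s ^ 4) := by
      simp only [hL_def, hP_def, hQ_def]
      field_simp
      ring
    have hlow : α ^ 2 / 2 * s ≤ L s * (1 - L s) * (P s - Q s) ^ 2 := by
      rw [hid, le_div_iff₀ (hden4 s)]
      have hs0 : (0:ℝ) ≤ s := by linarith
      have h4 : (1:ℝ) ≤ s ^ 4 := one_le_pow₀ hs1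
      have h5 : (1:ℝ) ≤ s ^ 5 := one_le_pow₀ hs1
      have key2 : s * (1 + s ^ 4) ≤ 2 * s ^ 6 := by
        nlinarith [mul_nonneg (pow_nonneg hs0 5) (sub_nonneg.2 hs1),
          mul_nonneg hs0 (sub_nonneg.2 h5)]
      nlinarith [mul_le_mul_of_nonneg_left key2 (by positivity : (0:ℝ) ≤ α ^ 2 / 2)]
    have := mul_le_mul_of_nonneg_left hlow hκ.le
    simp only [hG_def]
    nlinarith [key]
  -- continuity of G
  have hPcont : Continuous P := by
    simp only [hP_def]
    exact continuous_const.div (continuous_const.add (continuous_pow 4)) (fun s => (hden4 s).ne')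
  have hQcont : Continuous Q := by
    simp only [hQ_def]
    exact continuous_const.mul (continuous_const.add (continuous_pow 2))
  have hLcont : Continuous L := by
    simp only [hL_def]
    exact Continuous.div (continuous_const.add (continuous_pow 4))
      ((continuous_const.add (continuous_pow 2)).add (continuous_pow 4)) (fun s => (hden s).ne')
  have hβP : Continuous fun s => β (P s) :=
    hβcont.comp_continuous hPcont (fun s => hPpos s)
  have hβQ : Continuous fun s => β (Q s) :=
    hβcont.comp_continuous hQcont (fun s => hQpos s)
  have hGcont : Continuous G := by
    simp only [hG_def]
    exact (hLcont.mul hβP).add ((continuous_const.sub hLcont).mul hβQ)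
  -- the extended function
  set F : ℝ → ℝ := fun s => if s ≤ 0 then s + β α else G s with hF_def
  have hFcont : Continuous F := by
    rw [hF_def]
    refine Continuous.if_le (continuous_id.add continuous_const) hGcont
      continuous_id continuous_const ?_
    intro x hx
    rw [hx, hG0, zero_add]
  have hGnonneg : ∀ s : ℝ, 0 ≤ s → β α ≤ G s := by
    intro s hs
    rcases eq_or_lt_of_le hs with h | h
    · rw [← h, hG0]
    · rw [← hG0]
      exact (hGmono (Set.mem_Ici.2 le_rfl) (Set.mem_Ici.2 hs) h).le
  have hFneg : ∀ u : ℝ, u ≤ 0 → F u = u + β α := by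
    intro u hu
    simp only [hF_def]
    rw [if_pos hu]
  have hFpos' : ∀ u : ℝ, 0 < u → F u = G u := by
    intro u hu
    simp only [hF_def]
    rw [if_neg (not_le.2 hu)]
  have hFmono : StrictMono F := by
    intro s t hst
    rcases le_or_gt t 0 with htle | htpos
    · rw [hFneg s (hst.le.trans htle), hFneg t htle]
      linarith
    · rw [hFpos' t htpos]
      rcases le_or_gt s 0 with hsle | hspos
      · rw [hFneg s hsle]
        rcases lt_or_eq_of_le hsle with h | h
        · have := hGnonneg t htpos.le
          linarith
        · rw [h, zero_add, ← hG0]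
          exact hGmono (Set.mem_Ici.2 le_rfl) (Set.mem_Ici.2 htpos.le) htpos
      · rw [hFpos' s hspos]
        exact hGmono (Set.mem_Ici.2 hspos.le) (Set.mem_Ici.2 htpos.le) hst
  have hFtop : Filter.Tendsto F Filter.atTop Filter.atTop := by
    have hlin : Filter.Tendsto (fun s : ℝ => β α + κ * α ^ 2 / 2 * s)
        Filter.atTop Filter.atTop := by
      apply Filter.tendsto_atTop_add_const_left
      exact Filter.Tendsto.const_mul_atTop (by positivity) Filter.tendsto_id
    apply Filter.tendsto_atTop_mono' _ _ hlin
    filter_upwards [Filter.eventually_ge_atTop (1:ℝ)] with s hs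
    rw [hFpos' s (by linarith : (0:ℝ) < s)]
    exact hGgrow s hs
  have hFbot : Filter.Tendsto F Filter.atBot Filter.atBot := by
    have : F =ᶠ[Filter.atBot] fun s => s + β α := by
      filter_upwards [Filter.eventually_le_atBot (0:ℝ)] with s hs
      exact hFneg s hs
    rw [Filter.tendsto_congr' this]
    exact Filter.tendsto_atBot_add_const_right _ _ Filter.tendsto_id
  have hFsurj : Function.Surjective F := hFcont.surjective hFtop hFbot
  set e : ℝ ≃o ℝ := StrictMono.orderIsoOfSurjective F hFmono hFsurj with he_def
  have he_apply : ∀ x, e x = F x := fun x => rfl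
  set h : ℝ → ℝ := fun η => e.symm (β α + η) with hh_def
  have hFh : ∀ η, F (h η) = β α + η := by
    intro η
    rw [hh_def]
    simp only []
    rw [← he_apply]
    exact e.apply_symm_apply _
  have hhcont : Continuous h := by
    rw [hh_def]
    exact (OrderIso.continuous e.symm).comp (continuous_const.add continuous_id)
  have hF0 : F 0 = β α := by rw [hFneg 0 le_rfl, zero_add]
  have hh0 : h 0 = 0 := by
    rw [hh_def]
    simp only []
    rw [OrderIso.symm_apply_eq, he_apply, hF0, add_zero]
  have hhpos : ∀ η, 0 ≤ η → 0 ≤ h η := by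
    intro η hη
    by_contra hneg
    push_neg at hneg
    have := hFh η
    rw [hFneg _ hneg.le] at this
    linarith
  have hGh : ∀ η, 0 ≤ η → G (h η) = β α + η := by
    intro η hη
    have hFhη := hFh η
    rcases lt_or_eq_of_le (hhpos η hη) with hpos | heq
    · rw [hFpos' _ hpos] at hFhη
      exact hFhη
    · rw [← heq, hG0]
      rw [hFneg _ (le_of_eq heq.symm), ← heq] at hFhη
      have : η = 0 := by linarith
      rw [this, add_zero]
  refine ⟨fun η => L (h η), fun η => P (h η), fun η => Q (h η), ?_, ?_, ?_, ?_, ?_, ?_, ?_⟩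
  · exact ((hLcont.comp hhcont)).continuousOn
  · exact ((hPcont.comp hhcont)).continuousOn
  · exact ((hQcont.comp hhcont)).continuousOn
  · show L (h 0) = 1
    rw [hh0]; exact hL0
  · show P (h 0) = α
    rw [hh0]; exact hP0
  · show Q (h 0) = α
    rw [hh0]; exact hQ0
  · intro η hη
    exact ⟨hLpos _, hLle _, hPpos _, hQpos _, hmean _, hGh η hη⟩
end

section
/- Let β : (0,∞) → ℝ be continuous and strongly convex with modulus κ > 0, and let α > 0. Then for all sufficiently small η > 0 there exist λ ∈ (0,1) and ρ₁, ρ₂ > 0 such that, setting τ₁ = (2−λ)/λ, one has λτ₁ρ₁ − (1−λ)ρ₂ = α and λτ₁β(ρ₁) − (1−λ)β(ρ₂) = β(α) − η. -/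
/-- Solvability of system (5.4) ('etasystem2'): for all sufficiently small
`η > 0` there are `λ ∈ (0,1)` and `ρ₁, ρ₂ > 0` such that, with
`τ₁ = (2−λ)/λ`, one has `λτ₁ρ₁ − (1−λ)ρ₂ = α` and
`λτ₁β(ρ₁) − (1−λ)β(ρ₂) = β(α) − η`. -/
theorem etasystem2_solvable
    (β : ℝ → ℝ) (hcont : ContinuousOn β (Set.Ioi 0)) (κ : ℝ) (hκ : 0 < κ)
    (hβ : ∀ x₁ x₂ : ℝ, 0 < x₁ → 0 < x₂ → ∀ l : ℝ, 0 ≤ l → l ≤ 1 →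
      β (l * x₁ + (1 - l) * x₂) ≤
        l * β x₁ + (1 - l) * β x₂ - κ * l * (1 - l) * (x₁ - x₂) ^ 2)
    (α : ℝ) (hα : 0 < α) :
    ∃ η₀ : ℝ, 0 < η₀ ∧ ∀ η : ℝ, 0 < η → η < η₀ →
      ∃ l ρ₁ ρ₂ : ℝ, 0 < l ∧ l < 1 ∧ 0 < ρ₁ ∧ 0 < ρ₂ ∧
        l * ((2 - l) / l) * ρ₁ - (1 - l) * ρ₂ = α ∧
        l * ((2 - l) / l) * β ρ₁ - (1 - l) * β ρ₂ = β α - η := by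
  refine ⟨κ * α ^ 2 / 3, by positivity, fun η hη hηlt => ?_⟩
  set g : ℝ → ℝ := fun t => (3 / 2) * β ((2 * α + t) / 3) - (1 / 2) * β t with hg
  have hgcont : ContinuousOn g (Set.Icc α (2 * α)) := by
    apply ContinuousOn.sub
    · apply ContinuousOn.mul continuousOn_const
      apply hcont.comp (by fun_prop)
      intro t ht
      have := ht.1
      simp only [Set.mem_Ioi]
      linarith
    · apply ContinuousOn.mul continuousOn_const
      apply hcont.mono
      intro t ht
      simp only [Set.mem_Ioi]
      linarith [ht.1]
  have hgα : g α = β α := by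
    have : (2 * α + α) / 3 = α := by ring
    simp [hg, this]; ring
  have hbound : ∀ t : ℝ, 0 < t → g t ≤ β α - κ / 3 * (α - t) ^ 2 := by
    intro t ht
    have h := hβ α t hα ht (2 / 3) (by norm_num) (by norm_num)
    have harg : (2 : ℝ) / 3 * α + (1 - 2 / 3) * t = (2 * α + t) / 3 := by ring
    rw [harg] at h
    simp only [hg]
    nlinarith [h]
  have hg2α : g (2 * α) ≤ β α - κ * α ^ 2 / 3 := by
    have := hbound (2 * α) (by linarith)
    nlinarith [this]
  have hmem : β α - η ∈ Set.Icc (g (2 * α)) (g α) := by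
    refine ⟨le_trans hg2α (by linarith), by rw [hgα]; linarith⟩
  obtain ⟨t, ht, hgt⟩ := intermediate_value_Icc' (by linarith : α ≤ 2 * α) hgcont hmem
  refine ⟨1 / 2, (2 * α + t) / 3, t, by norm_num, by norm_num, by
    linarith [ht.1], by linarith [ht.1], by ring, ?_⟩
  have h32 : (1 : ℝ) / 2 * ((2 - 1 / 2) / (1 / 2)) = 3 / 2 := by norm_num
  rw [h32]
  have := hgt
  simp only [hg] at this
  linarith [this]
end

section
/- Let U ∈ ℝ^{3×3} with rows (m, v, w) where m = v = 0 and |w| ≥ 1, and let β : (0,∞) → ℝ be strongly convex with β(1) = 1. Then U lies in the rank-2 lamination convex hull (K_C)^{2lc} for some C ≤ max{C_β, 4|w|}, where C_β depends only on β, and K_C = {(ρu, u, β(ρ)u) : u ∈ ℝ³, 1/C ≤ |u| ≤ C, ρ ∈ [1/C, C]}. -/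
/-- The constraint set `K_C`: matrices with rows `(ρu, u, β(ρ)u)` where
`1/C ≤ |u| ≤ C` and `ρ ∈ [1/C, C]`. -/
noncomputable def Kset (β : ℝ → ℝ) (C : ℝ) : Set (Matrix (Fin 3) (Fin 3) ℝ) :=
  {U | ∃ (ρ : ℝ) (u : EuclideanSpace ℝ (Fin 3)),
    1 / C ≤ ρ ∧ ρ ≤ C ∧ 1 / C ≤ ‖u‖ ∧ ‖u‖ ≤ C ∧
    U = rowMat (ρ • u) u (β ρ • u)}

/-- The inductive `Hₙ`-condition of Definition 2.2 (rank-2 laminate data),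
with families recorded as lists `(λᵢ, Uᵢ)` in the (relabeled) canonical order. -/
inductive HCond : List (ℝ × Matrix (Fin 3) (Fin 3) ℝ) → Prop
  | single (U : Matrix (Fin 3) (Fin 3) ℝ) : HCond [(1, U)]
  | step (l₁ l₂ : ℝ) (U₁ U₂ : Matrix (Fin 3) (Fin 3) ℝ)
      (rest : List (ℝ × Matrix (Fin 3) (Fin 3) ℝ))
      (hl₁ : 0 < l₁) (hl₂ : 0 < l₂)
      (hrank : Matrix.rank (U₂ - U₁) ≤ 2)
      (hrest : HCond ((l₁ + l₂,
        (l₁ / (l₁ + l₂)) • U₁ + (l₂ / (l₁ + l₂)) • U₂) :: rest)) :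
      HCond ((l₁, U₁) :: (l₂, U₂) :: rest)

/-- The rank-2 lamination convex hull `K^{2lc}`. -/
def lamHull (K : Set (Matrix (Fin 3) (Fin 3) ℝ)) :
    Set (Matrix (Fin 3) (Fin 3) ℝ) :=
  {U | ∃ L : List (ℝ × Matrix (Fin 3) (Fin 3) ℝ),
    HCond L ∧ (∀ p ∈ L, p.2 ∈ K) ∧ U = (L.map (fun p => p.1 • p.2)).sum}

lemma rank_le_one_of_rows (c u : Fin 3 → ℝ) (M : Matrix (Fin 3) (Fin 3) ℝ)
    (h : ∀ i j, M i j = c i * u j) : M.rank ≤ 1 := by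
  have hM : M = Matrix.vecMulVec c u := by
    ext i j; simp [Matrix.vecMulVec_apply, h]
  rw [hM, Matrix.vecMulVec_eq (Fin 1)]
  exact le_trans (Matrix.rank_mul_le_left _ _)
    (by have := Matrix.rank_le_card_width (Matrix.replicateCol (Fin 1) c); simp at this; exact this)

lemma rank_sub_le_two (M N : Matrix (Fin 3) (Fin 3) ℝ) (c u : Fin 3 → ℝ)
    (h : ∀ i j, M i j - N i j = c i * u j) : Matrix.rank (M - N) ≤ 2 :=
  le_trans (rank_le_one_of_rows c u _ (fun i j => by
    simpa [Matrix.sub_apply] using h i j)) one_le_two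

lemma rank_diff1 (a₁ c₁ a₂ c₂ : ℝ) (u : EuclideanSpace ℝ (Fin 3)) :
    Matrix.rank (rowMat (a₂ • u) u (c₂ • u) - rowMat (a₁ • u) u (c₁ • u)) ≤ 2 := by
  refine rank_sub_le_two _ _ ![a₂ - a₁, 0, c₂ - c₁] u ?_
  intro i j
  fin_cases i <;>
    simp [rowMat, PiLp.smul_apply, smul_eq_mul] <;> ring

lemma rank_diff2 (a₃ c₃ m₁ m₂ a₁ c₁ a₂ c₂ : ℝ) (u : EuclideanSpace ℝ (Fin 3)) :
    Matrix.rank (rowMat (a₃ • (-u)) (-u) (c₃ • (-u))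
      - (m₁ • rowMat (a₁ • u) u (c₁ • u) + m₂ • rowMat (a₂ • u) u (c₂ • u))) ≤ 2 := by
  refine rank_sub_le_two _ _
    ![-a₃ - (m₁*a₁ + m₂*a₂), -1 - (m₁ + m₂), -c₃ - (m₁*c₁ + m₂*c₂)] u ?_
  intro i j
  fin_cases i <;>
    simp [rowMat, Matrix.add_apply, Matrix.smul_apply, PiLp.smul_apply,
      PiLp.neg_apply, smul_eq_mul] <;> ring

lemma sum_rowMat (l₁ l₂ l₃ a₁ c₁ a₂ c₂ a₃ c₃ : ℝ) (u : EuclideanSpace ℝ (Fin 3))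
    (h1 : l₁*a₁ + l₂*a₂ - l₃*a₃ = 0) (h2 : l₁ + l₂ - l₃ = 0) :
    l₁ • rowMat (a₁ • u) u (c₁ • u) + (l₂ • rowMat (a₂ • u) u (c₂ • u)
      + (l₃ • rowMat (a₃ • (-u)) (-u) (c₃ • (-u)) + 0)) =
    rowMat 0 0 ((l₁*c₁ + l₂*c₂ - l₃*c₃) • u) := by
  ext i j
  fin_cases i <;>
    simp [rowMat, Matrix.add_apply, Matrix.smul_apply, PiLp.smul_apply,
      PiLp.neg_apply, PiLp.zero_apply, smul_eq_mul]
  · linear_combination (u j) * h1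
  · linear_combination (u j) * h2
  · ring

set_option maxHeartbeats 1000000 in
/-- Lemma geom1: the matrix with rows `(0,0,w)`, `|w| ≥ 1`, lies in the rank-2
lamination convex hull of `K_C` for some `C ≤ max{C_β, 4|w|}`, where `C_β`
depends only on `β`. -/
theorem geom1 (β : ℝ → ℝ) (κ : ℝ) (hκ : 0 < κ)
    (hβ : ∀ x₁ x₂ : ℝ, 0 < x₁ → 0 < x₂ → ∀ l : ℝ, 0 ≤ l → l ≤ 1 →
      β (l * x₁ + (1 - l) * x₂) ≤
        l * β x₁ + (1 - l) * β x₂ - κ * l * (1 - l) * (x₁ - x₂) ^ 2)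
    (hβ1 : β 1 = 1) :
    ∃ Cβ : ℝ, ∀ w : EuclideanSpace ℝ (Fin 3), 1 ≤ ‖w‖ →
      ∃ C : ℝ, 1 < C ∧ C ≤ max Cβ (4 * ‖w‖) ∧
        rowMat 0 0 w ∈ lamHull (Kset β C) := by
  have hκ0 : κ ≠ 0 := ne_of_gt hκ
  set x1 : ℝ := 3/2 + 2/κ with hx1def
  set lam : ℝ := κ/(2*κ+4) with hlamdef
  have hx1 : 1 < x1 := by
    have : 0 < 2/κ := by positivity
    rw [hx1def]; linarith
  have hden : 0 < 2*κ+4 := by linarith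
  have hlam0 : 0 < lam := by rw [hlamdef]; positivity
  have hlam1 : lam < 1 := by
    rw [hlamdef, div_lt_one hden]; linarith
  have hid : lam * x1 + (1 - lam) * (1/2) = 1 := by
    rw [hlamdef, hx1def]; field_simp; ring
  have hquad : κ * lam * (1 - lam) * (x1 - 1/2) ^ 2 = κ/4 + 1 := by
    rw [hlamdef, hx1def]; field_simp; ring
  clear_value x1 lam
  set b : ℝ := lam * β x1 + (1 - lam) * β (1/2) with hbdef
  have hb : 2 ≤ b := by
    have key := hβ x1 (1/2) (by linarith) (by norm_num) lam hlam0.le hlam1.le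
    rw [hid, hβ1, hquad] at key
    rw [hbdef]; linarith
  set t : ℝ := (b-1)/2 with htdef
  clear_value b t
  have ht : 1/2 ≤ t := by rw [htdef]; linarith
  have ht0 : 0 < t := by linarith
  refine ⟨x1 + t + 4, ?_⟩
  intro w hw
  set C : ℝ := max (x1 + t + 4) (4 * ‖w‖) with hCdef
  have hwpos : 0 < ‖w‖ := by linarith
  have hC4 : 4 ≤ C := le_trans (by linarith) (le_max_right _ _)
  have hCx1 : x1 ≤ C := le_trans (by linarith) (le_max_left _ _)
  have hCt : t ≤ C := le_trans (by linarith) (le_max_left _ _)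
  have hCw : 4 * ‖w‖ ≤ C := le_max_right _ _
  have hCmax : C ≤ max (x1 + t + 4) (4 * ‖w‖) := le_of_eq hCdef.symm
  clear_value C
  have hCpos : 0 < C := by linarith
  have hCinv : 1/C ≤ 1/4 := by
    rw [div_le_div_iff₀ hCpos (by norm_num)]; linarith
  refine ⟨C, by linarith, le_refl C, ?_⟩
  set u : EuclideanSpace ℝ (Fin 3) := t⁻¹ • w with hudef
  have hu : ‖u‖ = ‖w‖ / t := by
    rw [hudef, norm_smul, Real.norm_eq_abs, abs_of_pos (by positivity),
      division_def, mul_comm]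
  have hwu : t • u = w := by
    rw [hudef, smul_smul, mul_inv_cancel₀ (ne_of_gt ht0), one_smul]
  clear_value u
  have hul : 1/C ≤ ‖u‖ := by
    rw [hu, div_le_div_iff₀ hCpos ht0]
    nlinarith
  have huu : ‖u‖ ≤ C := by
    rw [hu, div_le_iff₀ ht0]
    nlinarith
  refine ⟨[(lam/2, rowMat (x1 • u) u (β x1 • u)),
    ((1-lam)/2, rowMat ((1/2:ℝ) • u) u (β (1/2) • u)),
    (1/2, rowMat ((1:ℝ) • (-u)) (-u) (β 1 • (-u)))], ?_, ?_, ?_⟩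
  · refine HCond.step _ _ _ _ _ (by linarith) (by linarith)
      (rank_diff1 x1 (β x1) (1/2) (β (1/2)) u) ?_
    have e1 : lam/2 + (1-lam)/2 = 1/2 := by ring
    rw [e1]
    have e2 : lam/2/(1/2:ℝ) = lam := by ring
    have e3 : (1-lam)/2/(1/2:ℝ) = 1-lam := by ring
    rw [e2, e3]
    refine HCond.step _ _ _ _ _ (by norm_num) (by norm_num)
      (rank_diff2 1 (β 1) lam (1-lam) x1 (β x1) (1/2) (β (1/2)) u) ?_
    have e4 : (1/2:ℝ) + 1/2 = 1 := by norm_num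
    rw [e4]
    have e5 : (1/2:ℝ)/1 = 1/2 := by norm_num
    rw [e5]
    exact HCond.single _
  · intro p hp
    simp only [List.mem_cons, List.not_mem_nil, or_false] at hp
    rcases hp with h | h | h <;> subst h
    · exact ⟨x1, u, by linarith, by linarith, hul, huu, rfl⟩
    · exact ⟨1/2, u, by linarith, by linarith, hul, huu, rfl⟩
    · refine ⟨1, -u, by linarith, by linarith, ?_, ?_, rfl⟩
      · rwa [norm_neg]
      · rwa [norm_neg]
  · simp only [List.map_cons, List.map_nil, List.sum_cons, List.sum_nil]
    rw [sum_rowMat (lam/2) ((1-lam)/2) (1/2) x1 (β x1) (1/2) (β (1/2)) 1 (β 1) u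
      (by linear_combination hid/2) (by ring)]
    have hs : lam/2 * β x1 + (1-lam)/2 * β (1/2) - 1/2 * β 1 = t := by
      rw [hβ1, htdef, hbdef]; ring
    rw [hs, hwu]
end
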